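/- Let α ∈ [2/3, 1), let k ≥ 1 be an integer, let G be a graph and let S ⊆ V(G) be a (3k+1,α)-well-linked set in G. If F ⊆ V(G) is S-free with |F| = 3k, then T_F := {(A,B) ∈ S_k(G) | |B ∩ F| > 2k} is a tangle of order k in G, and T_F is a truncation of T_S (that is, T_F ⊆ T_S, where T_S := {(A,B) ∈ S_{3k+2}(G) | |S ∩ B| > α·|S|}). -/
import Mathlib


open SimpleGraph

/-- `(A, B)` is a separation of the graph `G`: `A ∪ B = V(G)` and there is no edge of `G`
with one endpoint in `A \ B` and the other in `B \ A`.  Its order is `(A ∩ B).ncard`. -/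
def IsSep {V : Type*} (G : SimpleGraph V) (A B : Set V) : Prop :=
  A ∪ B = Set.univ ∧ ∀ a b : V, a ∈ A \ B → b ∈ B \ A → ¬ G.Adj a b

/-- `X` is an `α`-balanced separator for `S` in `G`: every connected component `C` of
`G − X` satisfies `|V(C) ∩ S| ≤ α·|S|`. -/
def BalancedSeparator {V : Type*} (G : SimpleGraph V) (α : ℝ) (S X : Set V) : Prop :=
  ∀ C : (G.induce Xᶜ).ConnectedComponent,
    (((Subtype.val '' C.supp) ∩ S).ncard : ℝ) ≤ α * (S.ncard : ℝ)

/-- `S` is `(q, α)`-well-linked in `G`: there is no `α`-balanced separator for `S` of size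
at most `q`. -/
def WellLinked {V : Type*} (G : SimpleGraph V) (q : ℕ) (α : ℝ) (S : Set V) : Prop :=
  ∀ X : Set V, X.ncard ≤ q → ¬ BalancedSeparator G α S X

/-- `F` is `S`-free in `G` (with respect to the constant `α`): for every separation
`(A₁, A₂)` of `G` of order less than `|F|` and every side containing `F`, that side
contains more than `α·|S|` vertices of `S`. -/
def SFree {V : Type*} (G : SimpleGraph V) (α : ℝ) (S F : Set V) : Prop :=
  ∀ A₁ A₂ : Set V, IsSep G A₁ A₂ → (A₁ ∩ A₂).ncard < F.ncard →
    (F ⊆ A₁ → α * (S.ncard : ℝ) < ((A₁ ∩ S).ncard : ℝ)) ∧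
    (F ⊆ A₂ → α * (S.ncard : ℝ) < ((A₂ ∩ S).ncard : ℝ))

/-- `S` is strongly linked in `G`: for every partition `{S₁, S₂}` of `S` into two nonempty
parts, there is no separation `(A₁, A₂)` of `G` with `S₁ ⊆ A₁`, `S₂ ⊆ A₂` and
`|A₁ ∩ A₂| < min {|S₁|, |S₂|}`. -/
def StronglyLinked {V : Type*} (G : SimpleGraph V) (S : Set V) : Prop :=
  ∀ S₁ S₂ A₁ A₂ : Set V, S₁ ∪ S₂ = S → Disjoint S₁ S₂ → S₁.Nonempty → S₂.Nonempty →
    IsSep G A₁ A₂ → S₁ ⊆ A₁ → S₂ ⊆ A₂ →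
    min S₁.ncard S₂.ncard ≤ (A₁ ∩ A₂).ncard

/-- `G[A₁] ∪ G[A₂] ∪ G[A₃] = G`: the three induced subgraphs jointly cover all vertices and
all edges of `G`. -/
def TriCover {V : Type*} (G : SimpleGraph V) (A₁ A₂ A₃ : Set V) : Prop :=
  A₁ ∪ A₂ ∪ A₃ = Set.univ ∧
  ∀ u v : V, G.Adj u v →
    (u ∈ A₁ ∧ v ∈ A₁) ∨ (u ∈ A₂ ∧ v ∈ A₂) ∨ (u ∈ A₃ ∧ v ∈ A₃)

/-- `T` is a tangle of order `k` in `G`: `T` consists of separations of order less than `k`,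
orients every such separation (contains exactly one of `(A,B)` and `(B,A)`), and no three
small sides of members of `T` cover `G`. -/
def IsTangle {V : Type*} (G : SimpleGraph V) (k : ℕ) (T : Set (Set V × Set V)) : Prop :=
  (∀ p ∈ T, IsSep G p.1 p.2 ∧ (p.1 ∩ p.2).ncard < k) ∧
  (∀ A B : Set V, IsSep G A B → (A ∩ B).ncard < k → ((A, B) ∈ T ↔ (B, A) ∉ T)) ∧
  (∀ p₁ ∈ T, ∀ p₂ ∈ T, ∀ p₃ ∈ T, ¬ TriCover G p₁.1 p₂.1 p₃.1)

set_option linter.unusedSectionVars false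

section Aux
variable {V : Type*} [Fintype V] {G : SimpleGraph V} {A B F S : Set V}

lemma isSep_symm (h : IsSep G A B) : IsSep G B A :=
  ⟨by rw [Set.union_comm]; exact h.1, fun a b ha hb hadj => h.2 b a hb ha hadj.symm⟩

lemma isSep_union_right (h : IsSep G A B) (F : Set V) : IsSep G A (B ∪ F) := by
  refine ⟨Set.eq_univ_of_univ_subset ?_, ?_⟩
  · rw [← h.1]
    exact Set.union_subset_union_right A Set.subset_union_left
  · rintro a b ⟨haA, haB⟩ ⟨hbB, hbA⟩
    refine h.2 a b ⟨haA, fun hB => haB (Or.inl hB)⟩ ⟨?_, hbA⟩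
    rcases hbB with hb | hb
    · exact hb
    · have : b ∈ A ∪ B := by rw [h.1]; trivial
      rcases this with h' | h'
      · exact absurd h' hbA
      · exact h'

lemma side_of_mem_compl (h : IsSep G A B) {x : V} (hx : x ∈ (A ∩ B)ᶜ) :
    x ∈ A \ B ∨ x ∈ B \ A := by
  have : x ∈ A ∪ B := by rw [h.1]; trivial
  rcases this with h' | h'
  · exact Or.inl ⟨h', fun hB => hx ⟨h', hB⟩⟩
  · exact Or.inr ⟨h', fun hA => hx ⟨hA, h'⟩⟩

lemma walk_side (h : IsSep G A B) :
    ∀ {u w : ↥((A ∩ B)ᶜ)}, (G.induce (A ∩ B)ᶜ).Walk u w → (u : V) ∈ A \ B → (w : V) ∈ A \ B := by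
  intro u w p
  induction p with
  | nil => exact id
  | @cons u' v' w' hadj q ih =>
    intro hu
    apply ih
    have hG : G.Adj (u' : V) (v' : V) := hadj
    rcases side_of_mem_compl h v'.2 with hv | hv
    · exact hv
    · exact absurd hG (h.2 _ _ hu hv)

lemma walk_side' (h : IsSep G A B) :
    ∀ {u w : ↥((A ∩ B)ᶜ)}, (G.induce (A ∩ B)ᶜ).Walk u w → (u : V) ∈ B \ A → (w : V) ∈ B \ A := by
  intro u w p
  induction p with
  | nil => exact id
  | @cons u' v' w' hadj q ih =>
    intro hu
    apply ih
    have hG : G.Adj (u' : V) (v' : V) := hadj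
    rcases side_of_mem_compl h v'.2 with hv | hv
    · exact absurd hG.symm (h.2 _ _ hv hu)
    · exact hv

lemma comp_side (h : IsSep G A B) (C : (G.induce (A ∩ B)ᶜ).ConnectedComponent) :
    (Subtype.val '' C.supp ⊆ A \ B) ∨ (Subtype.val '' C.supp ⊆ B \ A) := by
  obtain ⟨v, hv⟩ := C.exists_rep
  rcases side_of_mem_compl h v.2 with hvs | hvs
  · left
    rintro x ⟨w, hw, rfl⟩
    rw [SimpleGraph.ConnectedComponent.mem_supp_iff, ← hv] at hw
    obtain ⟨p⟩ := (SimpleGraph.ConnectedComponent.eq.mp hw.symm)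
    exact walk_side h p hvs
  · right
    rintro x ⟨w, hw, rfl⟩
    rw [SimpleGraph.ConnectedComponent.mem_supp_iff, ← hv] at hw
    obtain ⟨p⟩ := (SimpleGraph.ConnectedComponent.eq.mp hw.symm)
    exact walk_side' h p hvs




/-- two disjoint subsets of a set have small total size -/
lemma ncard_add_le {X Y T : Set V} (hX : X ⊆ T) (hY : Y ⊆ T) (hd : X ∩ Y = ∅) :
    X.ncard + Y.ncard ≤ T.ncard := by
  have h1 := Set.ncard_inter_add_ncard_union X Y (Set.toFinite _) (Set.toFinite _)
  rw [hd, Set.ncard_empty] at h1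
  have h2 : (X ∪ Y).ncard ≤ T.ncard :=
    Set.ncard_le_ncard (Set.union_subset hX hY) (Set.toFinite _)
  omega

lemma bigcomp {α : ℝ} {k : ℕ} (hS : WellLinked G (3 * k + 1) α S)
    (h : IsSep G A B) (hord : (A ∩ B).ncard ≤ 3 * k + 1) :
    α * (S.ncard : ℝ) < ((S ∩ (A \ B)).ncard : ℝ) ∨
    α * (S.ncard : ℝ) < ((S ∩ (B \ A)).ncard : ℝ) := by
  have hb := hS (A ∩ B) hord
  rw [BalancedSeparator] at hb
  push_neg at hb
  obtain ⟨C, hC⟩ := hb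
  rcases comp_side h C with hside | hside
  · left
    refine lt_of_lt_of_le hC ?_
    have : (Subtype.val '' C.supp) ∩ S ⊆ S ∩ (A \ B) := by
      rintro x ⟨hx1, hx2⟩
      exact ⟨hx2, hside hx1⟩
    exact_mod_cast Nat.cast_le.mpr (Set.ncard_le_ncard this (Set.toFinite _))
  · right
    refine lt_of_lt_of_le hC ?_
    have : (Subtype.val '' C.supp) ∩ S ⊆ S ∩ (B \ A) := by
      rintro x ⟨hx1, hx2⟩
      exact ⟨hx2, hside hx1⟩
    exact_mod_cast Nat.cast_le.mpr (Set.ncard_le_ncard this (Set.toFinite _))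

lemma Slarge {α : ℝ} {k : ℕ} (hα₀ : 0 ≤ α) (hS : WellLinked G (3 * k + 1) α S) :
    (3 * k + 1 : ℝ) + α * (S.ncard : ℝ) < (S.ncard : ℝ) := by
  have h1 : 3 * k + 1 ≤ S.ncard := by
    by_contra hcon
    push_neg at hcon
    refine hS S (by omega) (fun C => ?_)
    have he : (Subtype.val '' C.supp) ∩ S = ∅ := by
      ext x
      simp only [Set.mem_inter_iff, Set.mem_image, Set.mem_empty_iff_false, iff_false]
      rintro ⟨⟨w, _, rfl⟩, hx2⟩
      exact w.2 hx2
    rw [he, Set.ncard_empty]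
    push_cast
    positivity
  obtain ⟨X, hXS, hX⟩ := Set.exists_subset_card_eq h1
  have hb := hS X (le_of_eq hX)
  rw [BalancedSeparator] at hb
  push_neg at hb
  obtain ⟨C, hC⟩ := hb
  have hsub : (Subtype.val '' C.supp) ∩ S ⊆ S \ X := by
    rintro x ⟨⟨w, _, rfl⟩, hx2⟩
    exact ⟨hx2, w.2⟩
  have h2 : ((Subtype.val '' C.supp) ∩ S).ncard ≤ S.ncard - (3 * k + 1) := by
    rw [← hX, ← Set.ncard_diff hXS (Set.toFinite _)]
    exact Set.ncard_le_ncard hsub (Set.toFinite _)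
  have h3 : (((Subtype.val '' C.supp) ∩ S).ncard : ℝ) ≤ (S.ncard : ℝ) - (3 * k + 1) := by
    have := Nat.cast_le (α := ℝ) |>.mpr h2
    rw [Nat.cast_sub h1] at this
    push_cast at this ⊢
    linarith
  linarith

/-- Sum of `F`-parts of the two sides. -/
lemma sum_F (h : IsSep G A B) :
    (A ∩ F).ncard + (B ∩ F).ncard ≤ F.ncard + (A ∩ B).ncard := by
  have h1 := Set.ncard_inter_add_ncard_union (A ∩ F) (B ∩ F) (Set.toFinite _) (Set.toFinite _)
  have h2 : (A ∩ F) ∪ (B ∩ F) = F := by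
    rw [← Set.union_inter_distrib_right, h.1, Set.univ_inter]
  have h3 : (A ∩ F) ∩ (B ∩ F) ⊆ A ∩ B := by
    rintro x ⟨⟨h1', _⟩, ⟨h2', _⟩⟩
    exact ⟨h1', h2'⟩
  have h4 := Set.ncard_le_ncard h3 (Set.toFinite _)
  rw [h2] at h1
  omega



/-- Central lemma: a small-order separation whose `B`-side holds more than `2k` of `F`
has most of `S` strictly inside `B \ A`. -/
lemma side_lemma {α : ℝ} {k : ℕ} (hk : 1 ≤ k) (hα₁ : 2 / 3 ≤ α)
    (hS : WellLinked G (3 * k + 1) α S) (hF : SFree G α S F) (hFk : F.ncard = 3 * k)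
    (h : IsSep G A B) (hord : (A ∩ B).ncard < k) (hBF : 2 * k < (B ∩ F).ncard) :
    α * (S.ncard : ℝ) < ((S ∩ (B \ A)).ncard : ℝ) := by
  have hα₀ : (0:ℝ) ≤ α := by linarith
  have hSl := Slarge hα₀ hS
  rcases bigcomp hS h (by omega) with hbig | hbig
  swap
  · exact hbig
  exfalso
  -- |A ∩ F| ≤ 2k - 2, i.e. |A ∩ F| + 2 ≤ 2k
  have hsum := sum_F (F := F) h
  have hAF : (A ∩ F).ncard + 2 ≤ 2 * k := by omega
  -- the separation (A, B ∪ F)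
  have hsep2 := isSep_union_right h F
  have hord2 : (A ∩ (B ∪ F)).ncard < F.ncard := by
    have he : A ∩ (B ∪ F) = (A ∩ B) ∪ (A ∩ F) := Set.inter_union_distrib_left A B F
    have := Set.ncard_union_le (A ∩ B) (A ∩ F)
    rw [← he] at this
    omega
  have hfree := (hF A (B ∪ F) hsep2 hord2).2 Set.subset_union_right
  -- bound |(B ∪ F) ∩ S| ≤ |B ∩ S| + |A ∩ F|
  have hsub : (B ∪ F) ∩ S ⊆ (B ∩ S) ∪ (A ∩ F) := by
    rintro x ⟨hx1, hx2⟩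
    rcases hx1 with hx | hx
    · exact Or.inl ⟨hx, hx2⟩
    · have : x ∈ A ∪ B := by rw [h.1]; trivial
      rcases this with h' | h'
      · exact Or.inr ⟨h', hx⟩
      · exact Or.inl ⟨h', hx2⟩
  have hb1 : ((B ∪ F) ∩ S).ncard ≤ (B ∩ S).ncard + (A ∩ F).ncard := by
    calc ((B ∪ F) ∩ S).ncard ≤ ((B ∩ S) ∪ (A ∩ F)).ncard :=
          Set.ncard_le_ncard hsub (Set.toFinite _)
      _ ≤ (B ∩ S).ncard + (A ∩ F).ncard :=
          Set.ncard_union_le _ _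
  -- |B ∩ S| + |S ∩ (A \ B)| ≤ |S|
  have hb2 : (B ∩ S).ncard + (S ∩ (A \ B)).ncard ≤ S.ncard := by
    refine ncard_add_le Set.inter_subset_right Set.inter_subset_left ?_
    ext x
    simp only [Set.mem_inter_iff, Set.mem_diff, Set.mem_empty_iff_false, iff_false]
    rintro ⟨⟨hB, _⟩, _, _, hB'⟩
    exact hB' hB
  -- move to the reals
  have c1 : (((B ∪ F) ∩ S).ncard : ℝ) ≤ ((B ∩ S).ncard : ℝ) + ((A ∩ F).ncard : ℝ) := by
    exact_mod_cast hb1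
  have c2 : ((B ∩ S).ncard : ℝ) + ((S ∩ (A \ B)).ncard : ℝ) ≤ (S.ncard : ℝ) := by
    exact_mod_cast hb2
  have c3 : ((A ∩ F).ncard : ℝ) + 2 ≤ 2 * k := by exact_mod_cast hAF
  have hprod : 0 ≤ (3 * α - 2) * (S.ncard : ℝ) :=
    mul_nonneg (by linarith) (Nat.cast_nonneg _)
  nlinarith [hfree, hbig, hSl]

/-- No small-order separation can have at most `2k` of `F` on the side opposite to
the large `S`-part. -/
lemma orient_aux {α : ℝ} {k : ℕ} (hk : 1 ≤ k) (hα₁ : 2 / 3 ≤ α)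
    (hS : WellLinked G (3 * k + 1) α S) (hF : SFree G α S F) (hFk : F.ncard = 3 * k)
    (h : IsSep G A B) (hord : (A ∩ B).ncard < k) (hBF : (B ∩ F).ncard ≤ 2 * k)
    (hbig : α * (S.ncard : ℝ) < ((S ∩ (B \ A)).ncard : ℝ)) : False := by
  have hα₀ : (0:ℝ) ≤ α := by linarith
  have hSl := Slarge hα₀ hS
  -- the separation (A ∪ F, B)
  have hsep2 : IsSep G (A ∪ F) B := isSep_symm (isSep_union_right (isSep_symm h) F)
  have hord2 : ((A ∪ F) ∩ B).ncard < F.ncard := by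
    have he : (A ∪ F) ∩ B = (A ∩ B) ∪ (F ∩ B) := Set.union_inter_distrib_right A F B
    have h1 := Set.ncard_union_le (A ∩ B) (F ∩ B)
    rw [← he] at h1
    rw [Set.inter_comm F B] at h1
    omega
  have hfree := (hF (A ∪ F) B hsep2 hord2).1 Set.subset_union_right
  -- bound |(A ∪ F) ∩ S| ≤ |A ∩ S| + |F|
  have hb1 : ((A ∪ F) ∩ S).ncard ≤ (A ∩ S).ncard + F.ncard := by
    calc ((A ∪ F) ∩ S).ncard ≤ ((A ∩ S) ∪ F).ncard := by
          refine Set.ncard_le_ncard ?_ (Set.toFinite _)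
          rintro x ⟨hx1, hx2⟩
          rcases hx1 with hx | hx
          · exact Or.inl ⟨hx, hx2⟩
          · exact Or.inr hx
      _ ≤ (A ∩ S).ncard + F.ncard :=
          Set.ncard_union_le _ _
  have hb2 : (A ∩ S).ncard + (S ∩ (B \ A)).ncard ≤ S.ncard := by
    refine ncard_add_le Set.inter_subset_right Set.inter_subset_left ?_
    ext x
    simp only [Set.mem_inter_iff, Set.mem_diff, Set.mem_empty_iff_false, iff_false]
    rintro ⟨⟨hA, _⟩, _, _, hA'⟩
    exact hA' hA
  have c1 : (((A ∪ F) ∩ S).ncard : ℝ) ≤ ((A ∩ S).ncard : ℝ) + 3 * k := by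
    rw [hFk] at hb1
    exact_mod_cast hb1
  have c2 : ((A ∩ S).ncard : ℝ) + ((S ∩ (B \ A)).ncard : ℝ) ≤ (S.ncard : ℝ) := by
    exact_mod_cast hb2
  have hprod : 0 ≤ (3 * α - 2) * (S.ncard : ℝ) :=
    mul_nonneg (by linarith) (Nat.cast_nonneg _)
  nlinarith [hfree, hbig, hSl]

/-- Every separation of order less than `k` has a side containing more than `2k`
vertices of `F`. -/
lemma orient {α : ℝ} {k : ℕ} (hk : 1 ≤ k) (hα₁ : 2 / 3 ≤ α)
    (hS : WellLinked G (3 * k + 1) α S) (hF : SFree G α S F) (hFk : F.ncard = 3 * k)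
    (h : IsSep G A B) (hord : (A ∩ B).ncard < k) :
    2 * k < (A ∩ F).ncard ∨ 2 * k < (B ∩ F).ncard := by
  by_contra hcon
  push_neg at hcon
  obtain ⟨hAF, hBF⟩ := hcon
  rcases bigcomp hS h (by omega) with hbig | hbig
  · exact orient_aux hk hα₁ hS hF hFk (isSep_symm h)
      (by rw [Set.inter_comm]; exact hord) hAF hbig
  · exact orient_aux hk hα₁ hS hF hFk h hord hBF hbig


/-- The small side of a member of `T_F` contains few vertices of `S`. -/
lemma small_side {α : ℝ} {k : ℕ} (hk : 1 ≤ k) (hα₁ : 2 / 3 ≤ α)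
    (hS : WellLinked G (3 * k + 1) α S) (hF : SFree G α S F) (hFk : F.ncard = 3 * k)
    (h : IsSep G A B) (hord : (A ∩ B).ncard < k) (hBF : 2 * k < (B ∩ F).ncard) :
    ((S ∩ A).ncard : ℝ) + α * (S.ncard : ℝ) < (S.ncard : ℝ) := by
  have h1 := side_lemma hk hα₁ hS hF hFk h hord hBF
  have h2 : (S ∩ A).ncard + (S ∩ (B \ A)).ncard ≤ S.ncard := by
    refine ncard_add_le Set.inter_subset_left Set.inter_subset_left ?_
    ext x
    simp only [Set.mem_inter_iff, Set.mem_diff, Set.mem_empty_iff_false, iff_false]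
    rintro ⟨⟨_, hA⟩, _, _, hA'⟩
    exact hA' hA
  have c2 : ((S ∩ A).ncard : ℝ) + ((S ∩ (B \ A)).ncard : ℝ) ≤ (S.ncard : ℝ) := by
    exact_mod_cast h2
  linarith

end Aux

/-- Let `α ∈ [2/3, 1)`, `k ≥ 1`, `G` a finite graph and `S` a
`(3k+1, α)`-well-linked set in `G`.  If `F` is `S`-free with `|F| = 3k`, then
`T_F := {(A,B) ∈ S_k(G) | |B ∩ F| > 2k}` is a tangle of order `k` in `G` and is a
truncation of `T_S := {(A,B) ∈ S_{3k+2}(G) | |S ∩ B| > α·|S|}`, i.e. `T_F ⊆ T_S`. -/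
theorem sFree_tangle_truncation {V : Type*} [Fintype V] (G : SimpleGraph V) (k : ℕ)
    (hk : 1 ≤ k) (α : ℝ) (hα₁ : 2 / 3 ≤ α) (hα₂ : α < 1) (S : Set V)
    (hS : WellLinked G (3 * k + 1) α S) (F : Set V) (hF : SFree G α S F)
    (hFk : F.ncard = 3 * k) :
    IsTangle G k
      {p : Set V × Set V | IsSep G p.1 p.2 ∧ (p.1 ∩ p.2).ncard < k ∧
        2 * k < (p.2 ∩ F).ncard} ∧
    {p : Set V × Set V | IsSep G p.1 p.2 ∧ (p.1 ∩ p.2).ncard < k ∧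
        2 * k < (p.2 ∩ F).ncard} ⊆
      {p : Set V × Set V | IsSep G p.1 p.2 ∧ (p.1 ∩ p.2).ncard < 3 * k + 2 ∧
        α * (S.ncard : ℝ) < (((S ∩ p.2).ncard : ℕ) : ℝ)} := by
  unfold IsTangle TriCover
  refine ⟨⟨fun p hp => ⟨hp.1, hp.2.1⟩, ?_, ?_⟩, ?_⟩
  · -- orientation
    intro A B hsep hord
    simp only [Set.mem_setOf_eq]
    constructor
    · rintro ⟨-, -, hBF⟩ ⟨-, -, hAF⟩
      have hsum := sum_F (F := F) hsep
      omega
    · intro hnot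
      refine ⟨hsep, hord, ?_⟩
      rcases orient hk hα₁ hS hF hFk hsep hord with hAF | hBF
      · exact absurd ⟨isSep_symm hsep, by rw [Set.inter_comm]; exact hord, hAF⟩ hnot
      · exact hBF
  · -- no three small sides cover G
    rintro p₁ hp₁ p₂ hp₂ p₃ hp₃ ⟨hcov, -⟩
    have hα₀ : (0:ℝ) ≤ α := by linarith
    have h₁ := small_side hk hα₁ hS hF hFk hp₁.1 hp₁.2.1 hp₁.2.2
    have h₂ := small_side hk hα₁ hS hF hFk hp₂.1 hp₂.2.1 hp₂.2.2
    have h₃ := small_side hk hα₁ hS hF hFk hp₃.1 hp₃.2.1 hp₃.2.2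
    have hcover : S ⊆ (S ∩ p₁.1) ∪ ((S ∩ p₂.1) ∪ (S ∩ p₃.1)) := by
      intro x hx
      have : x ∈ p₁.1 ∪ p₂.1 ∪ p₃.1 := by rw [hcov]; trivial
      rcases this with (h' | h') | h'
      · exact Or.inl ⟨hx, h'⟩
      · exact Or.inr (Or.inl ⟨hx, h'⟩)
      · exact Or.inr (Or.inr ⟨hx, h'⟩)
    have hn : S.ncard ≤ (S ∩ p₁.1).ncard + ((S ∩ p₂.1).ncard + (S ∩ p₃.1).ncard) := by
      calc S.ncard ≤ ((S ∩ p₁.1) ∪ ((S ∩ p₂.1) ∪ (S ∩ p₃.1))).ncard :=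
            Set.ncard_le_ncard hcover (Set.toFinite _)
        _ ≤ (S ∩ p₁.1).ncard + ((S ∩ p₂.1) ∪ (S ∩ p₃.1)).ncard := Set.ncard_union_le _ _
        _ ≤ (S ∩ p₁.1).ncard + ((S ∩ p₂.1).ncard + (S ∩ p₃.1).ncard) := by
            have := Set.ncard_union_le (S ∩ p₂.1) (S ∩ p₃.1)
            omega
    have cn : (S.ncard : ℝ) ≤ ((S ∩ p₁.1).ncard : ℝ) + (((S ∩ p₂.1).ncard : ℝ) +
        ((S ∩ p₃.1).ncard : ℝ)) := by exact_mod_cast hn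
    have hprod : 0 ≤ (3 * α - 2) * (S.ncard : ℝ) :=
      mul_nonneg (by linarith) (Nat.cast_nonneg _)
    nlinarith
  · -- truncation
    rintro p ⟨hsep, hord, hBF⟩
    refine ⟨hsep, by omega, ?_⟩
    have h1 := side_lemma hk hα₁ hS hF hFk hsep hord hBF
    refine lt_of_lt_of_le h1 ?_
    exact_mod_cast Nat.cast_le.mpr
      (Set.ncard_le_ncard (Set.inter_subset_inter_right S Set.diff_subset) (Set.toFinite _))
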